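/- arXiv:1410.7665 — 3 statements merged into one kernel-verified Lean document; each statement's English description precedes it below -/
import Mathlib

section
/- Let f₁, f₂ : ℝ → ℂ be measurable functions satisfying |f_j(s)| ≤ C/(λ+|s|)^{1+ε} for all s ∈ ℝ, where C, λ, ε > 0. Then for every S ≥ 0, the absolute value of the double integral of f₁(s₁)f₂(s₂) over the region {(s₁,s₂) : |s₁-s₂| ≥ S} is bounded by C'/(λ+S)^ε for some constant C' depending only on C, λ, ε. -/
open MeasureTheory Real Set Filter Topology

lemma tail_int (lam ε : ℝ) (hlam : 0 < lam) (hε : 0 < ε) (T : ℝ) (hT : 0 ≤ T) :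
    ∫ s in Set.Ioi T, (lam + s) ^ (-(1 + ε)) = (lam + T) ^ (-ε) / ε := by
  have hpos : ∀ x ∈ Set.Ici T, 0 < lam + x := fun x hx => by
    have : (0:ℝ) ≤ x := le_trans hT hx
    linarith
  have hderiv : ∀ x ∈ Set.Ici T,
      HasDerivAt (fun s : ℝ => -(lam + s) ^ (-ε) / ε) ((lam + x) ^ (-(1 + ε))) x := by
    intro x hx
    have h1 : HasDerivAt (fun s : ℝ => lam + s) 1 x := (hasDerivAt_id x).const_add lam
    have h2 := (h1.rpow_const (p := -ε) (Or.inl (hpos x hx).ne'))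
    have h3 := (h2.neg).div_const ε
    refine h3.congr_deriv ?_
    rw [show -ε - 1 = -(1+ε) by ring]
    field_simp
  have t1 : Tendsto (fun s : ℝ => lam + s) atTop atTop :=
    tendsto_atTop_add_const_left _ lam tendsto_id
  have t2 : Tendsto (fun s : ℝ => (lam + s) ^ (-ε)) atTop (𝓝 0) :=
    (tendsto_rpow_neg_atTop hε).comp t1
  have t3 : Tendsto (fun s : ℝ => -(lam + s) ^ (-ε) / ε) atTop (𝓝 0) := by
    simpa using (t2.neg).div_const ε
  have g'pos : ∀ x ∈ Set.Ioi T, 0 ≤ (lam + x) ^ (-(1 + ε)) := fun x hx =>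
    rpow_nonneg (hpos x (Set.Ioi_subset_Ici_self hx)).le _
  rw [integral_Ioi_of_hasDerivAt_of_nonneg' hderiv g'pos t3]
  ring

/-- Tail estimate for the double integral of a product of two decaying functions
over the region `|s₁ - s₂| ≥ S`. -/
theorem stmt_0 (C lam ε : ℝ) (hC : 0 < C) (hlam : 0 < lam) (hε : 0 < ε)
    (f₁ f₂ : ℝ → ℂ) (hm₁ : Measurable f₁) (hm₂ : Measurable f₂)
    (hb₁ : ∀ s : ℝ, ‖f₁ s‖ ≤ C / (lam + |s|) ^ (1 + ε))
    (hb₂ : ∀ s : ℝ, ‖f₂ s‖ ≤ C / (lam + |s|) ^ (1 + ε)) :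
    ∃ C' > 0, ∀ S : ℝ, 0 ≤ S →
      ‖∫ p in {p : ℝ × ℝ | S ≤ |p.1 - p.2|}, f₁ p.1 * f₂ p.2‖ ≤
        C' / (lam + S) ^ ε := by
  set g : ℝ → ℝ := fun s => C * (lam + |s|) ^ (-(1 + ε)) with hg_def
  have hbase : ∀ s : ℝ, 0 < lam + |s| := fun s => by
    have := abs_nonneg s; linarith
  have hb₁' : ∀ s : ℝ, ‖f₁ s‖ ≤ g s := fun s => by
    show ‖f₁ s‖ ≤ C * (lam + |s|) ^ (-(1 + ε))
    rw [Real.rpow_neg (hbase s).le, ← div_eq_mul_inv]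
    exact hb₁ s
  have hb₂' : ∀ s : ℝ, ‖f₂ s‖ ≤ g s := fun s => by
    show ‖f₂ s‖ ≤ C * (lam + |s|) ^ (-(1 + ε))
    rw [Real.rpow_neg (hbase s).le, ← div_eq_mul_inv]
    exact hb₂ s
  have hg_nonneg : ∀ s, 0 ≤ g s := fun s =>
    mul_nonneg hC.le (rpow_nonneg (hbase s).le _)
  have hg_cont : Continuous g :=
    continuous_const.mul ((continuous_const.add continuous_abs).rpow_const
      (fun s => Or.inl (hbase s).ne'))
  -- integrability of g
  have hg_int : Integrable g := by
    set m := min lam 1 with hm_def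
    have hm : 0 < m := lt_min hlam one_pos
    have hmle : m ≤ lam := min_le_left _ _
    have hm1 : m ≤ 1 := min_le_right _ _
    have hdom : Integrable (fun s : ℝ => (C * m ^ (-(1 + ε))) * (1 + ‖s‖) ^ (-(1 + ε))) :=
      (integrable_one_add_norm (E := ℝ)
        (by simp only [Module.finrank_self, Nat.cast_one]; linarith)).const_mul _
    refine hdom.mono' hg_cont.aestronglyMeasurable (Eventually.of_forall fun s => ?_)
    rw [Real.norm_of_nonneg (hg_nonneg s), Real.norm_eq_abs]
    have h1 : m * (1 + |s|) ≤ lam + |s| := by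
      have := abs_nonneg s; nlinarith
    have h2 : (lam + |s|) ^ (-(1 + ε)) ≤ (m * (1 + |s|)) ^ (-(1 + ε)) :=
      Real.rpow_le_rpow_of_nonpos (by positivity) h1 (by linarith)
    rw [Real.mul_rpow hm.le (by positivity)] at h2
    calc g s = C * (lam + |s|) ^ (-(1 + ε)) := rfl
      _ ≤ C * (m ^ (-(1 + ε)) * (1 + |s|) ^ (-(1 + ε))) := by
          exact mul_le_mul_of_nonneg_left h2 hC.le
      _ = (C * m ^ (-(1 + ε))) * (1 + |s|) ^ (-(1 + ε)) := by ring
  -- tail integral for g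
  have key : ∀ T : ℝ, 0 ≤ T →
      ∫ s in {s : ℝ | T ≤ |s|}, g s = 2 * (C * ((lam + T) ^ (-ε) / ε)) := by
    intro T hT
    have hIoi : ∫ s in Set.Ioi T, g s = C * ((lam + T) ^ (-ε) / ε) := by
      rw [setIntegral_congr_fun measurableSet_Ioi
        (f := g) (g := fun s => C * (lam + s) ^ (-(1 + ε)))
        (fun s hs => by rw [hg_def]; simp [abs_of_nonneg (hT.trans (le_of_lt hs))]),
        integral_const_mul, tail_int lam ε hlam hε T hT]
    have hIic : ∫ s in Set.Iic (-T), g s = C * ((lam + T) ^ (-ε) / ε) := by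
      rw [← integral_comp_neg_Ioi]
      simp only [hg_def, abs_neg]
      exact hIoi
    have hsetae : {s : ℝ | T ≤ |s|} =ᵐ[volume] ((Set.Iic (-T) ∪ Set.Ioi T : Set ℝ)) := by
      rw [MeasureTheory.ae_eq_set]
      constructor
      · refine measure_mono_null (fun s hs => ?_) (volume_singleton (a := T))
        simp only [Set.mem_diff, Set.mem_setOf_eq, Set.mem_union, Set.mem_Iic,
          Set.mem_Ioi, not_or, not_lt] at hs
        obtain ⟨h1, h2, h3⟩ := hs
        rcases le_abs.mp h1 with h | h
        · exact Set.mem_singleton_iff.mpr (le_antisymm h3 h)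
        · exfalso; linarith
      · refine measure_mono_null (fun s hs => ?_) (measure_empty (μ := volume))
        simp only [Set.mem_diff, Set.mem_union, Set.mem_Iic, Set.mem_Ioi,
          Set.mem_setOf_eq, not_le] at hs
        obtain ⟨h1, h2⟩ := hs
        rcases h1 with h | h
        · exact absurd (le_abs.mpr (Or.inr (by linarith))) (not_le.mpr h2)
        · exact absurd (le_abs.mpr (Or.inl h.le)) (not_le.mpr h2)
    rw [setIntegral_congr_set hsetae,
      setIntegral_union (Iic_disjoint_Ioi (by linarith)) measurableSet_Ioi
        hg_int.integrableOn hg_int.integrableOn, hIic, hIoi]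
    ring
  -- full integral of g
  have hI0 : ∫ s, g s = 2 * (C * (lam ^ (-ε) / ε)) := by
    have huniv : {s : ℝ | (0:ℝ) ≤ |s|} = Set.univ :=
      Set.eq_univ_of_forall fun s => abs_nonneg s
    have := key 0 le_rfl
    rw [huniv, setIntegral_univ] at this
    simpa using this
  refine ⟨8 * C ^ 2 * 2 ^ ε / (ε ^ 2 * lam ^ ε), by positivity, fun S hS => ?_⟩
  set A : Set (ℝ × ℝ) := {p : ℝ × ℝ | S ≤ |p.1 - p.2|} with hA_def
  set B : Set ℝ := {s : ℝ | S / 2 ≤ |s|} with hB_def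
  have hB_meas : MeasurableSet B := by
    have : IsClosed B := isClosed_le continuous_const continuous_abs
    exact this.measurableSet
  have hsub : A ⊆ (B ×ˢ Set.univ) ∪ (Set.univ ×ˢ B) := by
    rintro ⟨s₁, s₂⟩ hp
    simp only [hA_def, Set.mem_setOf_eq] at hp
    by_contra hcon
    simp only [Set.mem_union, Set.mem_prod, Set.mem_univ, and_true, true_and,
      hB_def, Set.mem_setOf_eq, not_or, not_le] at hcon
    have := abs_sub_abs_le_abs_sub s₁ s₂
    have h := abs_sub s₁ s₂
    have := abs_sub_le s₁ 0 s₂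
    simp only [sub_zero, zero_sub, abs_neg] at this
    linarith [hcon.1, hcon.2]
  set G : ℝ × ℝ → ℝ := fun p => g p.1 * g p.2 with hG_def
  have hG_int : Integrable G (volume : Measure (ℝ × ℝ)) := by
    rw [Measure.volume_eq_prod]; exact hg_int.mul_prod hg_int
  have hG_nonneg : ∀ p, 0 ≤ G p := fun p => mul_nonneg (hg_nonneg _) (hg_nonneg _)
  set F : ℝ × ℝ → ℂ := fun p => f₁ p.1 * f₂ p.2 with hF_def
  have hFle : ∀ p, ‖F p‖ ≤ G p := fun p => by
    rw [hF_def, norm_mul]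
    exact mul_le_mul (hb₁' p.1) (hb₂' p.2) (norm_nonneg _) (hg_nonneg _)
  have hF_meas : AEStronglyMeasurable F (volume.restrict A) :=
    (((hm₁.comp measurable_fst).mul (hm₂.comp measurable_snd)).aestronglyMeasurable).restrict
  have hGA : Integrable G (volume.restrict A) := hG_int.restrict
  have hFA : Integrable F (volume.restrict A) :=
    hGA.mono' hF_meas (ae_of_all _ hFle)
  have hfub1 : ∫ p in B ×ˢ Set.univ, G p = (∫ s in B, g s) * ∫ s, g s := by
    rw [Measure.volume_eq_prod, ← Measure.restrict_prod_eq_prod_univ, hG_def]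
    exact integral_prod_mul g g
  have hfub2 : ∫ p in Set.univ ×ˢ B, G p = (∫ s, g s) * ∫ s in B, g s := by
    rw [Measure.volume_eq_prod, ← Measure.prod_restrict, Measure.restrict_univ, hG_def]
    exact integral_prod_mul g g
  have main : ‖∫ p in A, F p‖ ≤ 2 * ((∫ s in B, g s) * ∫ s, g s) := by
    calc ‖∫ p in A, F p‖ = ‖∫ p in A, F p‖ := rfl
      _ ≤ ∫ p in A, ‖F p‖ := norm_integral_le_integral_norm _
      _ ≤ ∫ p in A, G p := integral_mono hFA.norm hGA hFle
      _ ≤ ∫ p in (B ×ˢ Set.univ) ∪ (Set.univ ×ˢ B), G p :=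
          setIntegral_mono_set hG_int.integrableOn (ae_of_all _ hG_nonneg)
            (HasSubset.Subset.eventuallyLE hsub)
      _ ≤ (∫ p in B ×ˢ Set.univ, G p) + ∫ p in Set.univ ×ˢ B, G p := by
          have hG1 : Integrable G (volume.restrict (B ×ˢ (Set.univ : Set ℝ))) :=
            hG_int.restrict
          have hG2 : Integrable G (volume.restrict ((Set.univ : Set ℝ) ×ˢ B)) :=
            hG_int.restrict
          refine le_trans (integral_mono_measure (Measure.restrict_union_le _ _)
            (ae_of_all _ hG_nonneg) (hG1.add_measure hG2)) (le_of_eq ?_)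
          exact integral_add_measure hG1 hG2
      _ = 2 * ((∫ s in B, g s) * ∫ s, g s) := by rw [hfub1, hfub2]; ring
  have hBval : ∫ s in B, g s = 2 * (C * ((lam + S / 2) ^ (-ε) / ε)) :=
    key (S / 2) (by linarith)
  -- numeric estimate
  have hhalf : (lam + S / 2) ^ (-ε) ≤ 2 ^ ε * (lam + S) ^ (-ε) := by
    have h0 : (0:ℝ) < (lam + S) / 2 := by linarith
    have h2 : (lam + S / 2) ^ (-ε) ≤ ((lam + S) / 2) ^ (-ε) :=
      Real.rpow_le_rpow_of_nonpos h0 (by linarith) (by linarith)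
    have h3 : ((lam + S) / 2) ^ (-ε) = 2 ^ ε * (lam + S) ^ (-ε) := by
      rw [Real.div_rpow (by linarith : (0:ℝ) ≤ lam + S) (by norm_num : (0:ℝ) ≤ 2),
        Real.rpow_neg (by norm_num : (0:ℝ) ≤ 2) ε, div_eq_mul_inv, inv_inv]
      ring
    rw [← h3]
    exact h2
  refine main.trans ?_
  rw [hBval, hI0]
  have h4 : 2 * (2 * (C * ((lam + S / 2) ^ (-ε) / ε)) * (2 * (C * (lam ^ (-ε) / ε))))
      = (8 * C ^ 2 / ε ^ 2 * lam ^ (-ε)) * (lam + S / 2) ^ (-ε) := by ring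
  rw [h4]
  have h5 : (8 * C ^ 2 / ε ^ 2 * lam ^ (-ε)) * (lam + S / 2) ^ (-ε)
      ≤ (8 * C ^ 2 / ε ^ 2 * lam ^ (-ε)) * (2 ^ ε * (lam + S) ^ (-ε)) := by
    refine mul_le_mul_of_nonneg_left hhalf ?_
    positivity
  refine h5.trans (le_of_eq ?_)
  rw [Real.rpow_neg hlam.le, Real.rpow_neg (by linarith)]
  have hl : (0:ℝ) < lam ^ ε := rpow_pos_of_pos hlam ε
  have hls : (0:ℝ) < (lam + S) ^ ε := rpow_pos_of_pos (by linarith) ε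
  field_simp
end

section
/- Let r₁, r₂ > 0 with 1/c ≤ r₁/r₂ ≤ c for some c ≥ 1, set r² = r₁r₂, Δr = r₂ − r₁, d = c − 1/c, and let ξ ∈ [ξ₀, 1] with ξ₀ > 0. If |Δs + Δr| ≤ (2r²ξ² + (Δr)²)^{1/2}, then (4r²ξ² + (Δr)²)^{1/2} − |Δs + Δr| ≥ b·r·ξ, where b = (4 + (d/ξ₀)²)^{-1/2}. -/
set_option maxHeartbeats 800000


/-- Geometric estimate for region (a) in case (iii) of the commutator decay theorem:
with `r = √(r₁r₂)`, `Δr = r₂ - r₁`, `d = c - 1/c`, `b = (4 + (d/ξ₀)²)^{-1/2}`,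
if `|Δs + Δr| ≤ (2r²ξ² + (Δr)²)^{1/2}` then
`(4r²ξ² + (Δr)²)^{1/2} − |Δs + Δr| ≥ b·r·ξ`. -/
theorem stmt_15 (c r₁ r₂ ξ₀ ξ Δs : ℝ) (hc : 1 ≤ c) (hr₁ : 0 < r₁) (hr₂ : 0 < r₂)
    (hrat₁ : 1 / c ≤ r₁ / r₂) (hrat₂ : r₁ / r₂ ≤ c)
    (hξ₀ : 0 < ξ₀) (hξ₁ : ξ₀ ≤ ξ) (hξ₂ : ξ ≤ 1)
    (h : |Δs + (r₂ - r₁)| ≤ Real.sqrt (2 * (r₁ * r₂) * ξ ^ 2 + (r₂ - r₁) ^ 2)) :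
    Real.sqrt (4 * (r₁ * r₂) * ξ ^ 2 + (r₂ - r₁) ^ 2) - |Δs + (r₂ - r₁)| ≥
      (Real.sqrt (4 + ((c - 1 / c) / ξ₀) ^ 2))⁻¹ * Real.sqrt (r₁ * r₂) * ξ := by
  have hc0 : (0:ℝ) < c := lt_of_lt_of_le one_pos hc
  have hR : (0:ℝ) < r₁ * r₂ := mul_pos hr₁ hr₂
  have hξ : 0 < ξ := lt_of_lt_of_le hξ₀ hξ₁
  set R := Real.sqrt (r₁ * r₂) with hRdef
  have hRpos : 0 < R := Real.sqrt_pos.mpr hR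
  have hRsq : R ^ 2 = r₁ * r₂ := Real.sq_sqrt hR.le
  set K := Real.sqrt (4 + ((c - 1 / c) / ξ₀) ^ 2) with hKdef
  have hKsq : K ^ 2 = 4 + ((c - 1 / c) / ξ₀) ^ 2 := Real.sq_sqrt (by positivity)
  have hKnn : 0 ≤ K := Real.sqrt_nonneg _
  have hK2 : 2 ≤ K := by nlinarith [sq_nonneg ((c - 1/c)/ξ₀)]
  have hKpos : 0 < K := lt_of_lt_of_le two_pos hK2
  -- ratio bounds
  have h1 : r₁ ≤ c * r₂ := by rw [div_le_iff₀ hr₂] at hrat₂; linarith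
  have h2 : r₂ ≤ c * r₁ := by
    rw [div_le_div_iff₀ hc0 hr₂] at hrat₁; linarith
  -- key bound on (Δr)²
  have hB : (r₂ - r₁) ^ 2 ≤ (c - 1 / c) ^ 2 * (r₁ * r₂) := by
    have hce : (c - 1 / c) ^ 2 = (c ^ 2 - 1) ^ 2 / c ^ 2 := by
      field_simp
    rw [hce, div_mul_eq_mul_div, le_div_iff₀ (pow_pos hc0 2)]
    have h3 : 0 ≤ (c * r₂ - r₁) * (c * r₁ - r₂) := by
      apply mul_nonneg <;> linarith
    have h4 : 0 ≤ (c - 1) * (c ^ 3 - 1) := by nlinarith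
    nlinarith [mul_nonneg h3 hc0.le, mul_nonneg h4 hR.le]
  -- bound Δr² by (d/ξ₀)² (Rξ)²
  have hB2 : (r₂ - r₁) ^ 2 ≤ ((c - 1 / c) / ξ₀) ^ 2 * ((r₁ * r₂) * ξ ^ 2) := by
    have hde : ((c - 1 / c) / ξ₀) * ξ₀ = c - 1 / c := div_mul_cancel₀ _ hξ₀.ne'
    have hd2 : (c - 1 / c) ^ 2 = ((c - 1 / c) / ξ₀) ^ 2 * ξ₀ ^ 2 := by
      rw [div_pow, div_mul_cancel₀ _ (pow_ne_zero 2 hξ₀.ne')]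
    have hξsq : ξ₀ ^ 2 ≤ ξ ^ 2 := by nlinarith
    have hmono := mul_le_mul_of_nonneg_left hξsq
      (mul_nonneg (sq_nonneg ((c - 1 / c) / ξ₀)) hR.le)
    nlinarith [hB, hmono]
  set s2 := Real.sqrt (2 * (r₁ * r₂) * ξ ^ 2 + (r₂ - r₁) ^ 2) with hs2def
  set s4 := Real.sqrt (4 * (r₁ * r₂) * ξ ^ 2 + (r₂ - r₁) ^ 2) with hs4def
  have hA : 0 ≤ 2 * (r₁ * r₂) * ξ ^ 2 + (r₂ - r₁) ^ 2 := by
    have := mul_nonneg hR.le (sq_nonneg ξ); have := sq_nonneg (r₂ - r₁); linarith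
  have hA4 : 0 ≤ 4 * (r₁ * r₂) * ξ ^ 2 + (r₂ - r₁) ^ 2 := by
    have := mul_nonneg hR.le (sq_nonneg ξ); have := sq_nonneg (r₂ - r₁); linarith
  have hs2sq : s2 ^ 2 = 2 * (r₁ * r₂) * ξ ^ 2 + (r₂ - r₁) ^ 2 := Real.sq_sqrt hA
  have hs4sq : s4 ^ 2 = 4 * (r₁ * r₂) * ξ ^ 2 + (r₂ - r₁) ^ 2 := Real.sq_sqrt hA4
  have hs2nn : 0 ≤ s2 := Real.sqrt_nonneg _
  have hs4nn : 0 ≤ s4 := Real.sqrt_nonneg _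
  have hs24 : s2 ≤ s4 := by
    apply Real.sqrt_le_sqrt
    have := mul_nonneg hR.le (sq_nonneg ξ); linarith
  -- s4 ≤ K * (R * ξ)
  have hs4K : s4 ≤ K * (R * ξ) := by
    have hKR : 0 ≤ K * (R * ξ) := by positivity
    have hsq : 4 * (r₁ * r₂) * ξ ^ 2 + (r₂ - r₁) ^ 2 ≤ (K * (R * ξ)) ^ 2 := by
      have : (K * (R * ξ)) ^ 2 = K ^ 2 * (R ^ 2 * ξ ^ 2) := by ring
      rw [this, hKsq, hRsq]; nlinarith [hB2]
    calc s4 ≤ Real.sqrt ((K * (R * ξ)) ^ 2) := Real.sqrt_le_sqrt hsq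
    _ = K * (R * ξ) := Real.sqrt_sq hKR
  -- main estimate
  have hdiff : 0 ≤ s4 - s2 := by linarith
  have hmul : (s4 - s2) * (s4 + s2) = 2 * (r₁ * r₂) * ξ ^ 2 := by
    linear_combination hs4sq - hs2sq
  have hRξ : 0 < R * ξ := mul_pos hRpos hξ
  have key : R * ξ ≤ (s4 - s2) * K := by
    have hsum : s4 + s2 ≤ 2 * (K * (R * ξ)) := by linarith
    have hprod : (s4 - s2) * (s4 + s2) ≤ (s4 - s2) * (2 * (K * (R * ξ))) :=
      mul_le_mul_of_nonneg_left hsum hdiff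
    have hA2 : 2 * (r₁ * r₂) * ξ ^ 2 = 2 * (R * ξ) ^ 2 := by rw [← hRsq]; ring
    rw [hmul, hA2] at hprod
    nlinarith [hRξ, hprod]
  have hfin : K⁻¹ * R * ξ ≤ s4 - s2 := by
    rw [inv_mul_eq_div, div_mul_eq_mul_div, div_le_iff₀ hKpos]
    linarith [key]
  linarith [h, hfin]
end

section
/- Let P⁰ be a nonnegative self-adjoint operator on a Hilbert space generating the unitary group U(τ) = exp(iτP⁰), and let B be a bounded operator such that τ ↦ U(λτ)BU(−λτ) is m-times continuously differentiable in norm with derivatives ∂₀ᵏB (λ > 0 fixed). Then (1+λP⁰)^m B (1+λP⁰)^{-m-1} = Σ_{l=0}^{m} (m choose l) (−iλ∂₀)^l B · (1+λP⁰)^{-l-1}, and in particular (1+λP⁰)^m B (1+λP⁰)^{-m-1} is a bounded operator with norm at most Σ_{l=0}^m (m choose l) λ^l ‖∂₀^l B‖. -/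
open MeasureTheory Complex

lemma pascal_sum_aux {M : Type*} [AddCommGroup M] [Module ℂ M] (c : ℂ) (n : ℕ)
    (T : ℕ → M) :
    ∑ l ∈ Finset.range (n + 2), (((n + 1).choose l : ℂ) * c ^ l) • T l
      = ∑ l ∈ Finset.range (n + 1), ((n.choose l : ℂ) * c ^ l) • T l
        + ∑ l ∈ Finset.range (n + 1), ((n.choose l : ℂ) * c ^ (l + 1)) • T (l + 1) := by
  rw [Finset.sum_range_succ' (fun l => (((n + 1).choose l : ℂ) * c ^ l) • T l) (n + 1),
    Finset.sum_range_succ' (fun l => ((n.choose l : ℂ) * c ^ l) • T l) n]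
  have h0 : ∀ i : ℕ, (((n + 1).choose (i + 1) : ℂ)) = (n.choose i : ℂ) + (n.choose (i + 1) : ℂ) := by
    intro i; rw [Nat.choose_succ_succ]; push_cast; ring
  simp only [h0, add_mul, add_smul, Finset.sum_add_distrib]
  rw [Finset.sum_range_succ (fun i => ((n.choose (i + 1) : ℂ) * c ^ (i + 1)) • T (i + 1)) n]
  simp only [Nat.choose_succ_self, Nat.cast_zero, zero_mul, zero_smul, add_zero,
    Nat.choose_zero_right, Nat.cast_one, one_mul, pow_zero, one_smul]
  abel

lemma opid_aux {H : Type*} [NormedAddCommGroup H] [InnerProductSpace ℂ H]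
    (G : H →L[ℂ] H) (D : ℕ → H →L[ℂ] H) (c : ℂ) (m : ℕ)
    (hKL : ∀ l < m, D l ∘L G = G ∘L D l + c • (G ∘L (D (l + 1) ∘L G))) :
    D 0 ∘L G ^ (m + 1)
      = (G ^ m) ∘L ∑ l ∈ Finset.range (m + 1),
          ((m.choose l : ℂ) * c ^ l) • (D l ∘L G ^ (l + 1)) := by
  induction m with
  | zero => simp [ContinuousLinearMap.one_def]
  | succ n ih =>
    have hterm : ∀ l < n + 1, (D l ∘L G ^ (l + 1)) ∘L G
        = G ∘L (D l ∘L G ^ (l + 1)) + c • (G ∘L (D (l + 1) ∘L G ^ (l + 2))) := by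
      intro l hl
      have e1 : (D l ∘L G ^ (l + 1)) ∘L G = (D l ∘L G) ∘L G ^ (l + 1) := by
        rw [ContinuousLinearMap.comp_assoc, ContinuousLinearMap.comp_assoc]
        congr 1
        rw [← ContinuousLinearMap.mul_def, ← ContinuousLinearMap.mul_def, ← pow_succ, ← pow_succ']
      rw [e1, hKL l hl, ContinuousLinearMap.add_comp, ContinuousLinearMap.smul_comp,
        ContinuousLinearMap.comp_assoc]
      congr 2
      rw [ContinuousLinearMap.comp_assoc, ContinuousLinearMap.comp_assoc,
        ← ContinuousLinearMap.mul_def G (G ^ (l + 1)), ← pow_succ']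
    have hstep : (∑ l ∈ Finset.range (n + 1), ((n.choose l : ℂ) * c ^ l) • (D l ∘L G ^ (l + 1))) ∘L G
        = G ∘L ∑ l ∈ Finset.range (n + 2), (((n + 1).choose l : ℂ) * c ^ l) • (D l ∘L G ^ (l + 1)) := by
      rw [pascal_sum_aux, ContinuousLinearMap.comp_add, ContinuousLinearMap.comp_finset_sum,
        ContinuousLinearMap.comp_finset_sum, ContinuousLinearMap.finset_sum_comp,
        ← Finset.sum_add_distrib]
      refine Finset.sum_congr rfl fun l hl => ?_
      rw [ContinuousLinearMap.smul_comp, hterm l (Finset.mem_range.mp hl), smul_add,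
        ContinuousLinearMap.comp_smul, smul_smul, mul_assoc, ← pow_succ, ContinuousLinearMap.comp_smul]
    have ihh := ih (fun l hl => hKL l (Nat.lt_succ_of_lt hl))
    calc D 0 ∘L G ^ (n + 2)
        = (D 0 ∘L G ^ (n + 1)) ∘L G := by
          rw [ContinuousLinearMap.comp_assoc, ← ContinuousLinearMap.mul_def (G ^ (n + 1)) G,
            ← pow_succ]
      _ = (G ^ n) ∘L ((∑ l ∈ Finset.range (n + 1), ((n.choose l : ℂ) * c ^ l) • (D l ∘L G ^ (l + 1))) ∘L G) := by
          rw [ihh, ContinuousLinearMap.comp_assoc]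
      _ = (G ^ n) ∘L (G ∘L ∑ l ∈ Finset.range (n + 2), (((n + 1).choose l : ℂ) * c ^ l) • (D l ∘L G ^ (l + 1))) := by
          rw [hstep]
      _ = (G ^ (n + 1)) ∘L ∑ l ∈ Finset.range (n + 2), (((n + 1).choose l : ℂ) * c ^ l) • (D l ∘L G ^ (l + 1)) := by
          rw [← ContinuousLinearMap.comp_assoc, ← ContinuousLinearMap.mul_def (G ^ n) G,
            ← pow_succ]

/-- Commutation identity `(1+λP⁰)^m B (1+λP⁰)^{-m-1} = Σ_{l=0}^m (m choose l)
(−iλ∂₀)^l B (1+λP⁰)^{-l-1}` and the resulting norm bound.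

Here `P` is a nonnegative self-adjoint (in general unbounded) operator generating the
unitary group `U(τ) = exp(iτP)`, `G = (1+λP)⁻¹` is its (bounded) resolvent, `B` is a
bounded operator whose conjugation `τ ↦ U(λτ)BU(−λτ)` is `m`-times continuously
differentiable in norm, and `D l` denotes the `l`-th norm-derivative `∂₀^l B`.  The
identity is stated multiplied from the left by the bounded operator `G^m`, and
boundedness of `(1+λP)^m B (1+λP)^{-m-1}` is expressed through the norm bound on
`Σ_{l=0}^m (m choose l)(−iλ)^l (∂₀^l B) G^{l+1}`. -/
theorem stmt_19 {H : Type*} [NormedAddCommGroup H] [InnerProductSpace ℂ H]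
    [CompleteSpace H]
    (U : ℝ → H →L[ℂ] H) (hU0 : U 0 = 1)
    (hUadd : ∀ σ τ : ℝ, U (σ + τ) = U σ ∘L U τ)
    (hUiso : ∀ (τ : ℝ) (x : H), ‖U τ x‖ = ‖x‖)
    (P : H →ₗ.[ℂ] H) (hsa : IsSelfAdjoint P)
    (hpos : ∀ x : P.domain, 0 ≤ (inner ℂ (x : H) (P x) : ℂ).re)
    (hgen : ∀ x : P.domain, HasDerivAt (fun τ : ℝ => U τ (x : H))
      (Complex.I • P x) 0)
    (lam : ℝ) (hlam : 0 < lam)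
    (G : H →L[ℂ] H)
    (hG : ∀ x : H, ∃ hx : G x ∈ P.domain, G x + lam • P ⟨G x, hx⟩ = x)
    (B : H →L[ℂ] H) (m : ℕ) (D : ℕ → H →L[ℂ] H) (hD0 : D 0 = B)
    (hder : ∀ l < m, ∀ τ : ℝ,
      HasDerivAt (fun σ : ℝ => U (lam * σ) ∘L D l ∘L U (-(lam * σ)))
        ((lam : ℂ) • (U (lam * τ) ∘L D (l + 1) ∘L U (-(lam * τ)))) τ) :
    (∀ ψ : H,
      B ((G ^ (m + 1)) ψ) =
        (G ^ m) ((∑ l ∈ Finset.range (m + 1),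
          ((m.choose l : ℂ) * (-Complex.I * (lam : ℂ)) ^ l) •
            (D l ∘L G ^ (l + 1))) ψ)) ∧
    ‖∑ l ∈ Finset.range (m + 1),
        ((m.choose l : ℂ) * (-Complex.I * (lam : ℂ)) ^ l) • (D l ∘L G ^ (l + 1))‖ ≤
      ∑ l ∈ Finset.range (m + 1), (m.choose l : ℝ) * lam ^ l * ‖D l‖ := by
  classical
  choose hGmem hGeq using hG
  -- group facts
  have hUapp : ∀ (τ : ℝ) (x : H), U τ (U (-τ) x) = x := by
    intro τ x
    have h : U τ ∘L U (-τ) = 1 := by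
      rw [← hUadd]; simp [hU0]
    calc U τ (U (-τ) x) = (U τ ∘L U (-τ)) x := rfl
      _ = x := by rw [h]; rfl
  have hinner : ∀ (τ : ℝ) (x y : H), (inner ℂ (U τ x) (U τ y) : ℂ) = inner ℂ x y := by
    intro τ x y
    exact LinearIsometry.inner_map_map ⟨(U τ : H →ₗ[ℂ] H), hUiso τ⟩ x y
  have hadj : ∀ (τ : ℝ) (x y : H), (inner ℂ (U τ x) y : ℂ) = inner ℂ x (U (-τ) y) := by
    intro τ x y
    calc (inner ℂ (U τ x) y : ℂ) = inner ℂ (U τ x) (U τ (U (-τ) y)) := by rw [hUapp]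
      _ = inner ℂ x (U (-τ) y) := hinner τ x (U (-τ) y)
  -- symmetry of P
  have hsymm : ∀ x y : P.domain, (inner ℂ (P x : H) ((y : H)) : ℂ) = inner ℂ ((x : H)) (P y) := by
    intro x y
    have hF : HasDerivAt (fun τ : ℝ => (inner ℂ (U τ (x : H)) (U τ (y : H)) : ℂ))
        ((inner ℂ (U 0 (x : H)) (Complex.I • (P y : H)) : ℂ)
          + inner ℂ (Complex.I • (P x : H)) (U 0 (y : H))) 0 :=
      (hgen x).inner ℂ (hgen y)
    have hconst : (fun τ : ℝ => (inner ℂ (U τ (x : H)) (U τ (y : H)) : ℂ))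
        = fun _ : ℝ => (inner ℂ ((x : H)) ((y : H)) : ℂ) := funext fun τ => hinner τ x y
    rw [hconst] at hF
    have h0 := hF.unique (hasDerivAt_const 0 _)
    simp only [hU0, ContinuousLinearMap.one_apply, inner_smul_right, inner_smul_left,
      Complex.conj_I] at h0
    have h1 : Complex.I * ((inner ℂ ((x : H)) (P y) : ℂ) - inner ℂ (P x : H) ((y : H))) = 0 := by
      linear_combination h0
    rcases mul_eq_zero.mp h1 with h | h
    · exact absurd h Complex.I_ne_zero
    · exact (sub_eq_zero.mp h).symm
  -- derivative of τ ↦ U(-(lam τ)) z at 0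
  have hlam0 : (lam : ℂ) ≠ 0 := by exact_mod_cast ne_of_gt hlam
  have hd1 : ∀ z : P.domain, HasDerivAt (fun τ : ℝ => U (-(lam * τ)) (z : H))
      ((-lam : ℝ) • (Complex.I • (P z : H))) 0 := by
    intro z
    have hlin : HasDerivAt (fun τ : ℝ => -(lam * τ)) (-lam) 0 := by
      have h := ((hasDerivAt_id (0 : ℝ)).const_mul lam).neg
      simp only [id_eq, mul_one] at h
      exact h
    have := HasDerivAt.scomp_of_eq (0 : ℝ) (hgen z) hlin (by norm_num)
    simpa [Function.comp_def] using this
  -- weak commutator identity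
  have hweak : ∀ l, l < m → ∀ x y : P.domain,
      (inner ℂ ((x : H)) (D (l + 1) (y : H)) : ℂ)
        = Complex.I * inner ℂ (P x : H) (D l (y : H))
          - Complex.I * inner ℂ ((x : H)) (D l (P y)) := by
    intro l hl x y
    have hx := hd1 x
    have hy : HasDerivAt (fun τ : ℝ => D l (U (-(lam * τ)) (y : H)))
        (D l ((-lam : ℝ) • (Complex.I • (P y : H)))) 0 := by
      simpa [Function.comp_def] using ((D l).restrictScalars ℝ).hasFDerivAt.comp_hasDerivAt 0 (hd1 y)
    have hF := hx.inner ℂ hy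
    have hop := hder l hl 0
    have hopy : HasDerivAt (fun σ : ℝ => (U (lam * σ) ∘L D l ∘L U (-(lam * σ))) (y : H))
        (((lam : ℂ) • (U (lam * 0) ∘L D (l + 1) ∘L U (-(lam * 0)))) (y : H)) 0 := by
      simpa [Function.comp_def] using
        ((ContinuousLinearMap.apply ℂ H ((y : H))).restrictScalars ℝ).hasFDerivAt.comp_hasDerivAt 0 hop
    have hF2 := (hasDerivAt_const (0 : ℝ) ((x : H))).inner ℂ hopy
    have heqfun : (fun τ : ℝ => (inner ℂ (U (-(lam * τ)) (x : H)) (D l (U (-(lam * τ)) (y : H))) : ℂ))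
        = fun σ : ℝ => (inner ℂ ((x : H)) ((U (lam * σ) ∘L D l ∘L U (-(lam * σ))) (y : H)) : ℂ) := by
      funext τ
      rw [ContinuousLinearMap.comp_apply, ContinuousLinearMap.comp_apply]
      have := hadj (-(lam * τ)) (x : H) (D l (U (-(lam * τ)) (y : H)))
      rw [neg_neg] at this
      exact this
    rw [heqfun] at hF
    have h0 := hF.unique hF2
    simp only [mul_zero, neg_zero, hU0, ContinuousLinearMap.one_apply,
      ContinuousLinearMap.comp_apply, ContinuousLinearMap.smul_apply,
      ContinuousLinearMap.one_def, ContinuousLinearMap.id_apply,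
      ContinuousLinearMap.coe_comp', Function.comp_apply,
      _root_.map_smul, ← Complex.coe_smul, inner_smul_right, inner_smul_left,
      Complex.conj_I, Complex.conj_ofReal, inner_zero_left, add_zero] at h0
    push_cast at h0
    apply mul_left_cancel₀ hlam0
    linear_combination -h0
  -- G is self-adjoint
  have hGsa : ∀ a b : H, (inner ℂ (G a) b : ℂ) = inner ℂ a (G b) := by
    intro a b
    conv_lhs => rw [← hGeq b]
    conv_rhs => rw [← hGeq a]
    rw [inner_add_right, inner_add_left, ← Complex.coe_smul, ← Complex.coe_smul,
      inner_smul_right, inner_smul_left, Complex.conj_ofReal,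
      hsymm ⟨G a, hGmem a⟩ ⟨G b, hGmem b⟩]
  -- the key commutation identity, as operators
  have hKLop : ∀ l < m, D l ∘L G
      = G ∘L D l + (-Complex.I * (lam : ℂ)) • (G ∘L (D (l + 1) ∘L G)) := by
    intro l hl
    ext ψ
    simp only [ContinuousLinearMap.comp_apply, ContinuousLinearMap.add_apply,
      ContinuousLinearMap.smul_apply]
    apply ext_inner_left ℂ
    intro w
    have h1 : (inner ℂ w (D l (G ψ)) : ℂ)
        = inner ℂ (G w) (D l (G ψ)) + (lam : ℂ) * inner ℂ (P ⟨G w, hGmem w⟩ : H) (D l (G ψ)) := by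
      conv_lhs => rw [← hGeq w]
      rw [inner_add_left, ← Complex.coe_smul, inner_smul_left, Complex.conj_ofReal]
    have h4 : D l ψ = D l (G ψ) + (lam : ℂ) • D l (P ⟨G ψ, hGmem ψ⟩) := by
      conv_lhs => rw [← hGeq ψ]
      rw [map_add, ← Complex.coe_smul, _root_.map_smul]
    have h5 : (inner ℂ (G w) (D l ψ) : ℂ)
        = inner ℂ (G w) (D l (G ψ)) + (lam : ℂ) * inner ℂ (G w) (D l (P ⟨G ψ, hGmem ψ⟩)) := by
      rw [h4, inner_add_right, inner_smul_right]
    have hw : (inner ℂ (G w) (D (l + 1) (G ψ)) : ℂ)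
        = Complex.I * inner ℂ (P ⟨G w, hGmem w⟩ : H) (D l (G ψ))
          - Complex.I * inner ℂ (G w) (D l (P ⟨G ψ, hGmem ψ⟩)) :=
      hweak l hl ⟨G w, hGmem w⟩ ⟨G ψ, hGmem ψ⟩
    rw [inner_add_right, inner_smul_right, h1, ← hGsa w (D l ψ), ← hGsa w (D (l + 1) (G ψ)), h5]
    linear_combination (Complex.I * (lam : ℂ)) * hw
      + ((lam : ℂ) * inner ℂ (P ⟨G w, hGmem w⟩ : H) (D l (G ψ))
          - (lam : ℂ) * inner ℂ (G w) (D l (P ⟨G ψ, hGmem ψ⟩))) * Complex.I_mul_I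
  -- norm bound for G
  have hGnorm : ∀ ψ : H, ‖G ψ‖ ≤ ‖ψ‖ := by
    intro ψ
    have h2 : (inner ℂ (G ψ) ψ : ℂ)
        = inner ℂ (G ψ) (G ψ) + (lam : ℂ) * inner ℂ (G ψ) (P ⟨G ψ, hGmem ψ⟩ : H) := by
      rw [← inner_smul_right, Complex.coe_smul, ← inner_add_right, hGeq ψ]
    have h5 : ((inner ℂ (G ψ) (G ψ) : ℂ)).re = ‖G ψ‖ * ‖G ψ‖ := by
      have := inner_self_eq_norm_mul_norm (𝕜 := ℂ) (x := G ψ)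
      simpa using this
    have h3 : ‖G ψ‖ * ‖G ψ‖ ≤ (inner ℂ (G ψ) ψ : ℂ).re := by
      rw [h2, Complex.add_re, Complex.re_ofReal_mul, h5]
      have h4 := hpos ⟨G ψ, hGmem ψ⟩
      have h4' : inner ℂ ((⟨G ψ, hGmem ψ⟩ : P.domain) : H) (P ⟨G ψ, hGmem ψ⟩) = (inner ℂ (G ψ) (P ⟨G ψ, hGmem ψ⟩ : H) : ℂ) := rfl
      nlinarith [mul_nonneg hlam.le h4]
    have h6 : (inner ℂ (G ψ) ψ : ℂ).re ≤ ‖G ψ‖ * ‖ψ‖ := by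
      have := re_inner_le_norm (𝕜 := ℂ) (G ψ) ψ
      simpa using this
    rcases ((norm_nonneg (G ψ)).eq_or_lt.imp_left Eq.symm) with h | h
    · rw [h]; exact norm_nonneg ψ
    · exact le_of_mul_le_mul_left (le_trans h3 h6) h
  have hGopn : ‖G‖ ≤ 1 :=
    ContinuousLinearMap.opNorm_le_bound G zero_le_one (fun ψ => by simpa using hGnorm ψ)
  constructor
  · intro ψ
    have hmain := opid_aux G D (-Complex.I * (lam : ℂ)) m hKLop
    have happ := congrArg (fun T : H →L[ℂ] H => T ψ) hmain
    simpa [hD0] using happ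
  · refine le_trans (norm_sum_le _ _) (Finset.sum_le_sum ?_)
    intro l _
    rw [norm_smul]
    have hcoef : ‖(m.choose l : ℂ) * (-Complex.I * (lam : ℂ)) ^ l‖
        = (m.choose l : ℝ) * lam ^ l := by
      rw [norm_mul, norm_pow, norm_mul, norm_neg, Complex.norm_I, one_mul]
      simp [Complex.norm_real, abs_of_pos hlam]
    have hDG : ‖D l ∘L G ^ (l + 1)‖ ≤ ‖D l‖ := by
      refine le_trans ((D l).opNorm_comp_le _) ?_
      have h7 : ‖G ^ (l + 1)‖ ≤ 1 :=
        le_trans (norm_pow_le' G (Nat.succ_pos l)) (pow_le_one₀ (norm_nonneg G) hGopn)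
      exact mul_le_of_le_one_right (norm_nonneg _) h7
    rw [hcoef]
    exact mul_le_mul_of_nonneg_left hDG (by positivity)
end
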